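/- Let m ≥ 1, M = 2m, and let V = Finset (Fin M) → ℂ with the Jordan–Wigner creation operators c_k and annihilation operators d_k for k : Fin M. Let ω : Fin m → ℝ with ω_k > 0 for all k, and for n : ℤ define the linear operators J_x^{(n)} = (1/2) ∑_{k<m} ω_k^n (c_k ∘ d_{m+k} + c_{m+k} ∘ d_k), J_y^{(n)} = (1/(2i)) ∑_{k<m} ω_k^n (c_k ∘ d_{m+k} − c_{m+k} ∘ d_k), and J_z^{(n)} = (1/2) ∑_{k<m} ω_k^n (c_k ∘ d_k − c_{m+k} ∘ d_{m+k}) on V, where m+k denotes the element of Fin 2m with value m + k. Then for all n, p : ℤ the su(2) loop-algebra relations hold: J_x^{(n)} ∘ J_y^{(p)} − J_y^{(p)} ∘ J_x^{(n)} = i J_z^{(n+p)}, J_y^{(n)} ∘ J_z^{(p)} − J_z^{(p)} ∘ J_y^{(n)} = i J_x^{(n+p)}, and J_z^{(n)} ∘ J_x^{(p)} − J_x^{(p)} ∘ J_z^{(n)} = i J_y^{(n+p)}. -/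

import Mathlib

open scoped BigOperators

/-- The fermionic Fock space over `M` modes. -/
abbrev FockSpace (M : ℕ) : Type := Finset (Fin M) → ℂ

/-- The Jordan–Wigner creation operator `c_k`. -/
noncomputable def crea {M : ℕ} (k : Fin M) : FockSpace M →ₗ[ℂ] FockSpace M :=
  (Pi.basisFun ℂ (Finset (Fin M))).constr ℂ fun S =>
    if k ∈ S then 0
    else ((-1 : ℂ) ^ (S.filter fun j => j < k).card) • (Pi.single (insert k S) (1 : ℂ) : FockSpace M)

/-- The Jordan–Wigner annihilation operator `d_k`. -/
noncomputable def annih {M : ℕ} (k : Fin M) : FockSpace M →ₗ[ℂ] FockSpace M :=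
  (Pi.basisFun ℂ (Finset (Fin M))).constr ℂ fun S =>
    if k ∈ S then ((-1 : ℂ) ^ (S.filter fun j => j < k).card) • (Pi.single (S.erase k) (1 : ℂ) : FockSpace M)
    else 0

/-- The element of `Fin (2*m)` with value `k`, for `k : Fin m`. -/
def low {m : ℕ} (k : Fin m) : Fin (2 * m) := ⟨k.1, by have := k.isLt; omega⟩

/-- The element of `Fin (2*m)` with value `m + k`, for `k : Fin m`. -/
def high {m : ℕ} (k : Fin m) : Fin (2 * m) := ⟨m + k.1, by have := k.isLt; omega⟩

/-- `J_x^{(n)} = (1/2) ∑_k ω_k^n (c_k ∘ d_{m+k} + c_{m+k} ∘ d_k)`. -/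
noncomputable def Jx (m : ℕ) (ω : Fin m → ℝ) (n : ℤ) :
    FockSpace (2 * m) →ₗ[ℂ] FockSpace (2 * m) :=
  (1 / 2 : ℂ) • ∑ k : Fin m, ((ω k ^ n : ℝ) : ℂ) •
    (crea (low k) ∘ₗ annih (high k) + crea (high k) ∘ₗ annih (low k))

/-- `J_y^{(n)} = (1/(2i)) ∑_k ω_k^n (c_k ∘ d_{m+k} − c_{m+k} ∘ d_k)`. -/
noncomputable def Jy (m : ℕ) (ω : Fin m → ℝ) (n : ℤ) :
    FockSpace (2 * m) →ₗ[ℂ] FockSpace (2 * m) :=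
  (1 / (2 * Complex.I) : ℂ) • ∑ k : Fin m, ((ω k ^ n : ℝ) : ℂ) •
    (crea (low k) ∘ₗ annih (high k) - crea (high k) ∘ₗ annih (low k))

/-- `J_z^{(n)} = (1/2) ∑_k ω_k^n (c_k ∘ d_k − c_{m+k} ∘ d_{m+k})`. -/
noncomputable def Jz (m : ℕ) (ω : Fin m → ℝ) (n : ℤ) :
    FockSpace (2 * m) →ₗ[ℂ] FockSpace (2 * m) :=
  (1 / 2 : ℂ) • ∑ k : Fin m, ((ω k ^ n : ℝ) : ℂ) •
    (crea (low k) ∘ₗ annih (low k) - crea (high k) ∘ₗ annih (high k))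

/-!
Writing `hop a b = c_a ∘ d_b`, the canonical anticommutation relations give
`[hop a b, hop c d] = δ_bc hop a d - δ_ad hop c b`, so second quantization
`A ↦ ∑ A_ab hop a b` is a Lie algebra homomorphism from matrices over any injectively embedded
set of modes. Labelling the `2m` modes by `Fin 2 × Fin m`, `J_i^{(n)}` is the second
quantization of `S_i ⊗ diag(ω^n)`, with `S_i` the spin-1/2 matrices. Commutators of such
Kronecker products multiply the diagonal factors, `ω^n ω^p = ω^(n+p)`, and the `su(2)`
relations of the `S_i` do the rest.
-/

open scoped Kronecker

lemma lie_mul_mul_of_anticommute {R : Type*} [Ring R] {a b c d : R}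
    (hac : a * c = -(c * a)) (hbd : b * d = -(d * b)) :
    ⁅a * b, c * d⁆ = a * (b * c + c * b) * d - c * (d * a + a * d) * b := by
  have swap : a * c * (b * d) = c * a * (d * b) := by rw [hac, hbd]; noncomm_ring
  have expand : a * (b * c + c * b) * d - c * (d * a + a * d) * b =
      a * b * (c * d) - c * d * (a * b) + (a * c * (b * d) - c * a * (d * b)) := by noncomm_ring
  rw [expand, swap, sub_self, add_zero, Ring.lie_def]

lemma Matrix.single_mul_single_eq_ite {ι R : Type*} [Fintype ι] [DecidableEq ι] [Semiring R]
    (i j k l : ι) (a b : R) :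
    single i j a * single k l b = if j = k then single i l (a * b) else 0 := by
  split_ifs with h
  · rw [h, single_mul_single_same]
  · exact single_mul_single_of_ne (h := h) ..

lemma Matrix.lie_kronecker_diagonal {ι κ R : Type*} [Fintype ι] [DecidableEq ι] [Fintype κ]
    [DecidableEq κ] [CommRing R] (A B : Matrix ι ι R) (u v : κ → R) :
    ⁅A ⊗ₖ diagonal u, B ⊗ₖ diagonal v⁆ = ⁅A, B⁆ ⊗ₖ diagonal (u * v) := by
  simp only [Ring.lie_def, ← mul_kronecker_mul, diagonal_mul_diagonal, mul_comm (v _)]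
  ext ⟨i, k⟩ ⟨j, l⟩
  simp [kroneckerMap_apply, sub_mul, Pi.mul_def]

namespace JordanWigner

section Fock

variable {M : ℕ}

noncomputable def jwSign (S : Finset (Fin M)) (k : Fin M) : ℂ :=
  (-1 : ℂ) ^ (S.filter fun j => j < k).card

lemma crea_single (k : Fin M) (S : Finset (Fin M)) :
    crea k (Pi.single S 1 : FockSpace M) =
      if k ∈ S then 0 else jwSign S k • (Pi.single (insert k S) 1 : FockSpace M) := by
  rw [← Pi.basisFun_apply ℂ, crea, Module.Basis.constr_basis]
  rfl

lemma annih_single (k : Fin M) (S : Finset (Fin M)) :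
    annih k (Pi.single S 1 : FockSpace M) =
      if k ∈ S then jwSign S k • (Pi.single (S.erase k) 1 : FockSpace M) else 0 := by
  rw [← Pi.basisFun_apply ℂ, annih, Module.Basis.constr_basis]
  rfl

lemma jwSign_mul_self (S : Finset (Fin M)) (k : Fin M) : jwSign S k * jwSign S k = 1 := by
  rw [jwSign, ← pow_add, ← two_mul, pow_mul]
  norm_num

lemma jwSign_insert {S : Finset (Fin M)} {b : Fin M} (hb : b ∉ S) (a : Fin M) :
    jwSign (insert b S) a = (if b < a then -1 else 1) * jwSign S a := by
  unfold jwSign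
  rw [Finset.filter_insert]
  split_ifs
  · rw [Finset.card_insert_of_notMem (by simp [hb]), pow_succ, mul_comm]
  · rw [one_mul]

lemma jwSign_erase {S : Finset (Fin M)} {b : Fin M} (hb : b ∈ S) (a : Fin M) :
    jwSign (S.erase b) a = (if b < a then -1 else 1) * jwSign S a := by
  conv_rhs =>
    rw [← Finset.insert_erase hb, jwSign_insert (Finset.notMem_erase b S), ← mul_assoc]
  split_ifs <;> norm_num

lemma end_ext_of_single {f g : Module.End ℂ (FockSpace M)}
    (h : ∀ S : Finset (Fin M), f (Pi.single S 1) = g (Pi.single S 1)) : f = g :=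
  (Pi.basisFun ℂ _).ext fun S => by simpa using h S

lemma annih_mul_crea_add_crea_mul_annih (a b : Fin M) :
    (annih b * crea a + crea a * annih b : Module.End ℂ (FockSpace M)) =
      if a = b then 1 else 0 := by
  refine end_ext_of_single fun S => ?_
  by_cases hab : a = b
  · subst hab
    by_cases hA : a ∈ S
    · simp [crea_single, annih_single, hA, Finset.insert_erase hA, jwSign_erase hA, smul_smul,
        jwSign_mul_self]
    · simp [crea_single, annih_single, hA, Finset.erase_insert hA, jwSign_insert hA, smul_smul,
        jwSign_mul_self]
  by_cases hA : a ∈ S <;> by_cases hB : b ∈ S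
  · simp [crea_single, annih_single, hA, hB, hab]
  · simp [crea_single, annih_single, hA, hB, hab]
  · simp [crea_single, annih_single, hA, hB, hab, Finset.erase_insert_of_ne hab,
      jwSign_insert hA, jwSign_erase hB, smul_smul]
    rcases lt_or_gt_of_ne hab with h | h <;> simp [h, h.not_gt, mul_comm]
  · simp [crea_single, annih_single, hA, hB, hab, Ne.symm hab]

lemma crea_mul_crea_eq_neg (a b : Fin M) :
    (crea a * crea b : Module.End ℂ (FockSpace M)) = -(crea b * crea a) := by
  refine end_ext_of_single fun S => ?_
  by_cases hab : a = b
  · subst hab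
    by_cases hA : a ∈ S <;> simp [crea_single, hA]
  by_cases hA : a ∈ S <;> by_cases hB : b ∈ S
  · simp [crea_single, hA, hB]
  · simp [crea_single, hA, hB]
  · simp [crea_single, hA, hB]
  · simp [crea_single, hA, hB, hab, Ne.symm hab, Finset.insert_comm a b, jwSign_insert hA,
      jwSign_insert hB, smul_smul]
    rcases lt_or_gt_of_ne hab with h | h <;> simp [h, h.not_gt, mul_comm]

lemma annih_mul_annih_eq_neg (a b : Fin M) :
    (annih a * annih b : Module.End ℂ (FockSpace M)) = -(annih b * annih a) := by
  refine end_ext_of_single fun S => ?_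
  by_cases hab : a = b
  · subst hab
    by_cases hA : a ∈ S <;> simp [annih_single, hA]
  by_cases hA : a ∈ S <;> by_cases hB : b ∈ S
  · simp [annih_single, hA, hB, hab, Ne.symm hab, Finset.erase_right_comm (a := a),
      jwSign_erase hA, jwSign_erase hB, smul_smul]
    rcases lt_or_gt_of_ne hab with h | h <;> simp [h, h.not_gt, mul_comm]
  · simp [annih_single, hA, hB]
  · simp [annih_single, hA, hB]
  · simp [annih_single, hA, hB]

noncomputable def hop (a b : Fin M) : Module.End ℂ (FockSpace M) := crea a * annih b

lemma lie_hop_hop (a b c d : Fin M) :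
    ⁅hop a b, hop c d⁆ = (if b = c then hop a d else 0) - (if d = a then hop c b else 0) := by
  rw [hop, hop, lie_mul_mul_of_anticommute (crea_mul_crea_eq_neg a c) (annih_mul_annih_eq_neg b d),
    annih_mul_crea_add_crea_mul_annih, annih_mul_crea_add_crea_mul_annih]
  split_ifs <;> simp_all [hop]

end Fock

section SecondQuantization

variable {M : ℕ} {ι : Type*} [Fintype ι] (e : ι → Fin M)

noncomputable def secondQuant (A : Matrix ι ι ℂ) : Module.End ℂ (FockSpace M) :=
  ∑ i, ∑ j, A i j • hop (e i) (e j)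

lemma secondQuant_zero : secondQuant e (0 : Matrix ι ι ℂ) = 0 := by
  simp [secondQuant]

lemma secondQuant_add (A B : Matrix ι ι ℂ) :
    secondQuant e (A + B) = secondQuant e A + secondQuant e B := by
  simp only [secondQuant, Matrix.add_apply, add_smul, Finset.sum_add_distrib]

lemma secondQuant_sub (A B : Matrix ι ι ℂ) :
    secondQuant e (A - B) = secondQuant e A - secondQuant e B :=
  eq_sub_of_add_eq (by rw [← secondQuant_add, sub_add_cancel])

lemma secondQuant_smul (c : ℂ) (A : Matrix ι ι ℂ) :
    secondQuant e (c • A) = c • secondQuant e A := by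
  simp [secondQuant, Finset.smul_sum, smul_smul]

lemma secondQuant_single [DecidableEq ι] (i j : ι) (a : ℂ) :
    secondQuant e (Matrix.single i j a) = a • hop (e i) (e j) := by
  simp [secondQuant, Matrix.single_apply, ite_and]

variable {e} [DecidableEq ι]

lemma lie_secondQuant_single (he : Function.Injective e) (i j k l : ι) (a b : ℂ) :
    ⁅secondQuant e (Matrix.single i j a), secondQuant e (Matrix.single k l b)⁆ =
      secondQuant e ⁅Matrix.single i j a, Matrix.single k l b⁆ := by
  have hops := lie_hop_hop (e i) (e j) (e k) (e l)
  simp only [Ring.lie_def, he.eq_iff] at hops ⊢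
  have scalars : a • hop (e i) (e j) * b • hop (e k) (e l) -
      b • hop (e k) (e l) * a • hop (e i) (e j) =
        (a * b) • (hop (e i) (e j) * hop (e k) (e l) - hop (e k) (e l) * hop (e i) (e j)) := by
    rw [smul_mul_smul_comm, smul_mul_smul_comm, mul_comm b a]
    exact (smul_sub _ _ _).symm
  rw [secondQuant_single, secondQuant_single, scalars, hops, Matrix.single_mul_single_eq_ite,
    Matrix.single_mul_single_eq_ite, secondQuant_sub]
  split_ifs <;> simp [secondQuant_single, secondQuant_zero, mul_comm b, smul_sub]

lemma lie_secondQuant (he : Function.Injective e) (A B : Matrix ι ι ℂ) :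
    ⁅secondQuant e A, secondQuant e B⁆ = secondQuant e ⁅A, B⁆ := by
  induction A using Matrix.induction_on' with
  | h_zero => simp [Ring.lie_def, secondQuant_zero]
  | h_add A A' hA hA' =>
    simp only [Ring.lie_def] at hA hA' ⊢
    rw [secondQuant_add, Matrix.add_mul, Matrix.mul_add, add_sub_add_comm, secondQuant_add,
      ← hA, ← hA']
    noncomm_ring
  | h_std_basis i j a =>
    induction B using Matrix.induction_on' with
    | h_zero => simp [Ring.lie_def, secondQuant_zero]
    | h_add B B' hB hB' =>
      simp only [Ring.lie_def] at hB hB' ⊢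
      rw [secondQuant_add, Matrix.add_mul, Matrix.mul_add, add_sub_add_comm, secondQuant_add,
        ← hB, ← hB']
      noncomm_ring
    | h_std_basis k l b => exact lie_secondQuant_single he i j k l a b

end SecondQuantization

lemma secondQuant_kronecker_diagonal {M : ℕ} {ι κ : Type*} [Fintype ι] [Fintype κ]
    [DecidableEq κ] (e : ι × κ → Fin M) (A : Matrix ι ι ℂ) (u : κ → ℂ) :
    secondQuant e (A ⊗ₖ Matrix.diagonal u) =
      ∑ i, ∑ j, A i j • ∑ k, u k • hop (e (i, k)) (e (j, k)) := by
  simp only [secondQuant, Fintype.sum_prod_type, Matrix.kroneckerMap_apply, Matrix.diagonal_apply,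
    mul_ite, mul_zero, ite_smul, zero_smul, Finset.sum_ite_eq, Finset.mem_univ, if_true,
    Finset.smul_sum, smul_smul]
  exact Finset.sum_congr rfl fun i _ => Finset.sum_comm

section Spin

open Complex

noncomputable def spinX : Matrix (Fin 2) (Fin 2) ℂ := !![0, 1 / 2; 1 / 2, 0]

noncomputable def spinY : Matrix (Fin 2) (Fin 2) ℂ := !![0, -I / 2; I / 2, 0]

noncomputable def spinZ : Matrix (Fin 2) (Fin 2) ℂ := !![1 / 2, 0; 0, -1 / 2]

lemma lie_spinX_spinY : ⁅spinX, spinY⁆ = I • spinZ := by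
  ext i j
  fin_cases i <;> fin_cases j <;>
    simp [Ring.lie_def, spinX, spinY, spinZ, Complex.ext_iff] <;> norm_num

lemma lie_spinY_spinZ : ⁅spinY, spinZ⁆ = I • spinX := by
  ext i j
  fin_cases i <;> fin_cases j <;>
    simp [Ring.lie_def, spinX, spinY, spinZ, Complex.ext_iff] <;> norm_num

lemma lie_spinZ_spinX : ⁅spinZ, spinX⁆ = I • spinY := by
  ext i j
  fin_cases i <;> fin_cases j <;>
    simp [Ring.lie_def, spinX, spinY, spinZ, Complex.ext_iff] <;> norm_num

end Spin

section Loop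

variable {m : ℕ} (ω : Fin m → ℝ)

lemma finProdFinEquiv_zero (k : Fin m) : finProdFinEquiv ((0 : Fin 2), k) = low k := by
  ext
  simp [finProdFinEquiv, low]

lemma finProdFinEquiv_one (k : Fin m) : finProdFinEquiv ((1 : Fin 2), k) = high k := by
  ext
  simp [finProdFinEquiv, high, add_comm]

/-- The Fock-space image of the loop-algebra element `A ⊗ tⁿ`. Mode `(i, k)` is
`finProdFinEquiv (i, k) = k + m * i`, that is `low k` for `i = 0` and `high k` for `i = 1`. -/
noncomputable def loopGen (A : Matrix (Fin 2) (Fin 2) ℂ) (n : ℤ) :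
    Module.End ℂ (FockSpace (2 * m)) :=
  secondQuant finProdFinEquiv (A ⊗ₖ Matrix.diagonal fun k => ((ω k ^ n : ℝ) : ℂ))

lemma lie_loopGen {ω : Fin m → ℝ} (hω : ∀ k, ω k ≠ 0) (A B : Matrix (Fin 2) (Fin 2) ℂ)
    (n p : ℤ) : ⁅loopGen ω A n, loopGen ω B p⁆ = loopGen ω ⁅A, B⁆ (n + p) := by
  rw [loopGen, loopGen, lie_secondQuant finProdFinEquiv.injective,
    Matrix.lie_kronecker_diagonal, loopGen]
  congr
  ext k
  simp [zpow_add₀ (hω k)]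

lemma loopGen_smul (c : ℂ) (A : Matrix (Fin 2) (Fin 2) ℂ) (n : ℤ) :
    loopGen ω (c • A) n = c • loopGen ω A n := by
  rw [loopGen, Matrix.smul_kronecker, secondQuant_smul, loopGen]

lemma Jx_eq_loopGen (n : ℤ) : Jx m ω n = loopGen ω spinX n := by
  rw [loopGen, secondQuant_kronecker_diagonal]
  simp [Jx, spinX, Fin.sum_univ_two, hop, Module.End.mul_eq_comp, finProdFinEquiv_zero,
    finProdFinEquiv_one, Finset.smul_sum, Finset.sum_add_distrib]
  abel

lemma Jy_eq_loopGen (n : ℤ) : Jy m ω n = loopGen ω spinY n := by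
  rw [loopGen, secondQuant_kronecker_diagonal]
  simp [Jy, spinY, mul_comm Complex.I, Fin.sum_univ_two, hop, Module.End.mul_eq_comp,
    finProdFinEquiv_zero, finProdFinEquiv_one, Finset.smul_sum, Finset.sum_add_distrib,
    div_eq_mul_inv, neg_mul, neg_smul, Finset.sum_neg_distrib, sub_eq_add_neg]
  abel

lemma Jz_eq_loopGen (n : ℤ) : Jz m ω n = loopGen ω spinZ n := by
  rw [loopGen, secondQuant_kronecker_diagonal]
  simp [Jz, spinZ, Fin.sum_univ_two, hop, Module.End.mul_eq_comp, finProdFinEquiv_zero,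
    finProdFinEquiv_one, Finset.smul_sum, Finset.sum_add_distrib, div_eq_mul_inv, neg_mul,
    neg_smul, Finset.sum_neg_distrib, sub_eq_add_neg]

end Loop

end JordanWigner

open JordanWigner

theorem su2_loop_algebra_relations (m : ℕ)
    (ω : Fin m → ℝ) (hω : ∀ k, 0 < ω k) (n p : ℤ) :
    (Jx m ω n ∘ₗ Jy m ω p - Jy m ω p ∘ₗ Jx m ω n = Complex.I • Jz m ω (n + p))
    ∧ (Jy m ω n ∘ₗ Jz m ω p - Jz m ω p ∘ₗ Jy m ω n = Complex.I • Jx m ω (n + p))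
    ∧ (Jz m ω n ∘ₗ Jx m ω p - Jx m ω p ∘ₗ Jz m ω n = Complex.I • Jy m ω (n + p)) := by
  have hω' : ∀ k, ω k ≠ 0 := fun k => (hω k).ne'
  refine ⟨?_, ?_, ?_⟩ <;>
    simp only [Jx_eq_loopGen, Jy_eq_loopGen, Jz_eq_loopGen, ← Module.End.mul_eq_comp,
      ← Ring.lie_def, lie_loopGen hω', lie_spinX_spinY, lie_spinY_spinZ, lie_spinZ_spinX,
      loopGen_smul]
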